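/- There exists a 7-regular triangle-free graph on 24 vertices whose chromatic number is 5. -/

import Mathlib

/-!
Triangle-freeness, 7-regularity and a proper 5-colouring of the explicit graph are checked by
evaluation. For non-4-colourability, vertices `0` and `1` are adjacent, so after permuting the
colours any 4-colouring gives them colours `0` and `1`. A backtracking search then colours the
vertices `2, 3, …` in order, each avoiding the colours of its earlier neighbours, and runs out of
options. The search is sound because a proper colouring is a branch along which it would succeed.
-/

open Nat (ofDigits)

theorem Nat.ofDigits_map_range_succ (k v : ℕ) (F : ℕ → ℕ) :
    ofDigits k ((List.range (v + 1)).map F) = ofDigits k ((List.range v).map F) + k ^ v * F v := by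
  rw [List.range_succ, List.map_append, Nat.ofDigits_append, List.length_map, List.length_range,
    List.map_singleton, Nat.ofDigits_singleton]

theorem Nat.ofDigits_map_range_div_pow_mod {k v j : ℕ} {F : ℕ → ℕ} (hF : ∀ i, F i < k)
    (hj : j < v) : ofDigits k ((List.range v).map F) / k ^ j % k = F j := by
  have hk : 0 < k := (Nat.zero_le _).trans_lt (hF 0)
  rw [Nat.ofDigits_div_pow_eq_ofDigits_drop j hk _ (by simpa using fun i _ => hF i),
    List.drop_eq_getElem_cons (by simpa), Nat.ofDigits_cons, Nat.add_mul_mod_self_left,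
    List.getElem_map, List.getElem_range, Nat.mod_eq_of_lt (hF j)]

theorem Nat.rec_or_eq_any_range (p : ℕ → Bool) (k : ℕ) :
    Nat.rec (motive := fun _ => Bool) false (fun c found => found || p c) k =
      (List.range k).any p := by
  induction k with
  | zero => rfl
  | succ k ih => simp [List.range_succ, ← ih]

theorem List.rec_and_eq_all {α : Type*} (p : α → Bool) (l : List α) :
    List.rec (motive := fun _ => Bool) true (fun a _ ok => p a && ok) l = l.all p := by
  induction l with
  | nil => rfl
  | cons a l ih => simp only [List.all_cons, ← ih]

namespace SimpleGraph

variable {V α : Type*} {G : SimpleGraph V}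

theorem Coloring.exists_apply_eq_apply_eq_of_adj [DecidableEq α] (C : G.Coloring α) {u v : V}
    (huv : G.Adj u v) {a b : α} (hab : a ≠ b) :
    ∃ C' : G.Coloring α, C' u = a ∧ C' v = b := by
  set σ := Equiv.swap (C u) a
  have hσv : σ (C v) ≠ a := by
    rw [← Equiv.swap_apply_left (C u) a]
    exact σ.injective.ne (C.valid huv).symm
  refine ⟨G.recolorOfEquiv (σ.trans (Equiv.swap (σ (C v)) b)) C, ?_, ?_⟩
  · simp [σ, Equiv.swap_apply_of_ne_of_ne hσv.symm hab]
  · simp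

theorem ncard_neighborSet_eq_degree (v : V) [Fintype (G.neighborSet v)] :
    (G.neighborSet v).ncard = G.degree v := by
  rw [Set.ncard_eq_toFinset_card', ← neighborFinset_def, card_neighborFinset_eq_degree]

def ofEarlierNeighbors (n : ℕ) (L : ℕ → List ℕ) : SimpleGraph (Fin n) :=
  fromRel fun v j => j.val ∈ L v.val

instance (n : ℕ) (L : ℕ → List ℕ) : DecidableRel (ofEarlierNeighbors n L).Adj :=
  fun _ _ => inferInstanceAs (Decidable (_ ∧ _))

/-- The base-`k` digits of `P` are the colours of the vertices `0, …, v - 1`; the result says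
whether they extend to `v, …, v + m - 1`, each vertex `w` avoiding the colours of `L w`.
Recursors and `Nat.beq` (rather than pattern matching and `!=`) make kernel evaluation several
times faster; `canExtendColoring_succ` is the readable form. -/
def canExtendColoring (k : ℕ) (L : ℕ → List ℕ) (m : ℕ) : ℕ → ℕ → Bool :=
  m.rec (fun _ _ => true) fun _ extend v P =>
    k.rec false fun c found => found ||
      (L v).rec true (fun j _ ok => !(P / k ^ j % k).beq c && ok) &&
        extend (v + 1) (P + k ^ v * c)

theorem canExtendColoring_succ (k : ℕ) (L : ℕ → List ℕ) (m v P : ℕ) :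
    canExtendColoring k L (m + 1) v P = (List.range k).any fun c =>
      (L v).all (fun j => !(P / k ^ j % k).beq c) &&
        canExtendColoring k L m (v + 1) (P + k ^ v * c) := by
  simp only [canExtendColoring, List.rec_and_eq_all, Nat.rec_or_eq_any_range]

theorem canExtendColoring_ofDigits {n k : ℕ} {L : ℕ → List ℕ}
    (hL : ∀ v < n, ∀ j ∈ L v, j < v) {F : ℕ → ℕ} (hFk : ∀ v, F v < k)
    (hF : ∀ v < n, ∀ j ∈ L v, F j ≠ F v) :
    ∀ m v, v + m ≤ n → canExtendColoring k L m v (ofDigits k ((List.range v).map F)) = true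
  | 0, _, _ => rfl
  | m + 1, v, hvm => by
    have hv : v < n := by omega
    rw [canExtendColoring_succ, List.any_eq_true]
    refine ⟨F v, List.mem_range.2 (hFk v), ?_⟩
    rw [Bool.and_eq_true, List.all_eq_true, ← Nat.ofDigits_map_range_succ]
    refine ⟨fun j hj => ?_, canExtendColoring_ofDigits hL hFk hF m (v + 1) (by omega)⟩
    rw [Nat.ofDigits_map_range_div_pow_mod hFk (hL v hv j hj), Bool.not_eq_true',
      ← Bool.not_eq_true, Nat.beq_eq]
    exact hF v hv j hj

/-- The initial state `P = k` colours the adjacent vertices `0` and `1` with `0` and `1`. -/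
theorem not_colorable_of_canExtendColoring_eq_false {n k : ℕ} {L : ℕ → List ℕ}
    (hL : ∀ v < n, ∀ j ∈ L v, j < v) (hn : 2 ≤ n) (h10 : 0 ∈ L 1)
    (hsearch : canExtendColoring k L (n - 2) 2 k = false) :
    ¬(ofEarlierNeighbors n L).Colorable k := by
  rintro ⟨C⟩
  have h01 : (ofEarlierNeighbors n L).Adj ⟨0, by omega⟩ ⟨1, by omega⟩ :=
    (fromRel_adj _ _ _).2 ⟨by simp, Or.inr h10⟩
  have hk : 2 ≤ k := Fin.nontrivial_iff_two_le.1 ⟨_, _, C.valid h01⟩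
  obtain ⟨C, hC0, hC1⟩ := C.exists_apply_eq_apply_eq_of_adj h01 (a := ⟨0, by omega⟩)
    (b := ⟨1, hk⟩) (by simp)
  set F : ℕ → ℕ := fun v => if hv : v < n then C ⟨v, hv⟩ else 0
  have hFk : ∀ v, F v < k := fun v => by
    unfold F; split_ifs
    exacts [(C _).isLt, by omega]
  have hF : ∀ v < n, ∀ j ∈ L v, F j ≠ F v := fun v hv j hj => by
    have hjv := hL v hv j hj
    simp only [F, dif_pos hv, dif_pos (hjv.trans hv)]
    refine Fin.val_injective.ne (C.valid ((fromRel_adj _ _ _).2 ⟨?_, Or.inr hj⟩))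
    simp [Fin.ext_iff, hjv.ne]
  have hprefix : ofDigits k [F 0, F 1] = k := by
    simp [F, show 0 < n by omega, show 1 < n by omega, hC0, hC1, Nat.ofDigits_cons]
  have hsucceeds := canExtendColoring_ofDigits hL hFk hF (n - 2) 2 (by omega)
  rw [show (List.range 2).map F = [F 0, F 1] from rfl, hprefix, hsearch] at hsucceeds
  exact Bool.false_ne_true hsucceeds

end SimpleGraph

open SimpleGraph

def graph24EarlierNeighbors : List (List ℕ) :=
  [[], [0], [0], [2], [1, 3], [0, 4], [1, 2], [3, 5, 6], [4, 6], [0, 7, 8], [1, 3, 8],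
   [2, 5, 9, 10], [2, 4, 9, 10], [3, 5, 6, 12], [1, 7, 8, 11, 13], [0, 4, 6, 11], [1, 3, 5, 9],
   [7, 8, 12, 15, 16], [10, 14, 15, 16], [0, 3, 6, 11, 17, 18], [2, 9, 13, 17, 18],
   [5, 12, 14, 15, 19, 20], [0, 4, 7, 10, 16, 20], [1, 2, 8, 13, 18, 21, 22]]

abbrev graph24 : SimpleGraph (Fin 24) :=
  ofEarlierNeighbors 24 (graph24EarlierNeighbors.getD · [])

theorem graph24_cliqueFree_three : graph24.CliqueFree 3 := by
  have : ∀ a b c : Fin 24, graph24.Adj a b → graph24.Adj a c → graph24.Adj b c → False := by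
    decide +kernel
  intro s hs
  obtain ⟨a, b, c, hab, hac, hbc, -⟩ := is3Clique_iff.1 hs
  exact this a b c hab hac hbc

theorem graph24_isRegularOfDegree : graph24.IsRegularOfDegree 7 := by
  unfold IsRegularOfDegree
  decide +kernel

theorem graph24_colorable_five : graph24.Colorable 5 :=
  ⟨.mk ![0, 1, 1, 0, 2, 1, 0, 2, 1, 3, 2, 0, 0, 2, 3, 1, 2, 3, 0, 1, 4, 2, 1, 3] <| by
    decide +kernel⟩

theorem graph24_not_colorable_four : ¬graph24.Colorable 4 :=
  not_colorable_of_canExtendColoring_eq_false (by decide +kernel) (by norm_num) (by decide +kernel)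
    (by decide +kernel)

/-- There exists a 7-regular triangle-free graph on 24 vertices with chromatic number 5
(degrees are expressed via the cardinality of neighbour sets). -/
theorem exists_seven_regular_triangle_free_five_chromatic_on_24_vertices :
    ∃ G : SimpleGraph (Fin 24),
      G.CliqueFree 3 ∧ (∀ v, (G.neighborSet v).ncard = 7) ∧ G.chromaticNumber = 5 := by
  refine ⟨graph24, graph24_cliqueFree_three,
    fun v => (ncard_neighborSet_eq_degree v).trans (graph24_isRegularOfDegree v), ?_⟩
  rw [show (5 : ℕ∞) = (4 : ℕ) + 1 by norm_num, chromaticNumber_eq_iff_colorable_not_colorable]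
  exact ⟨graph24_colorable_five, graph24_not_colorable_four⟩
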